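/- Let K be a k-algebra with conjugation that is left alternative, left distributive, weakly right distributive, with k-valued trace and anisotropic k-valued norm, and let D ∈ k. Then the Conway-Smith double K ×^D K is left alternative: x(xy) = x²y for all x,y ∈ K ×^D K. -/

import Mathlib

/-
For `x = (a, b)` in the double put `N(x) = n(a) - D n(b)`. Then `x x = t(a) x - N(x)`, and
left multiplication by `γ x - δ` is `γ (x ·) - δ`, so `(x x) y = t(a) (x y) - N(x) y`. It
remains to show `x (x y) = t(a) (x y) - N(x) y`. In `K`, writing `ā = t(a) - a`, left
alternativity gives `ā (a z) = n(a) z` and `a (ā z) = n(a) z`; with `b⁻¹ = n(b)⁻¹ b̄` these make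
the `b`-terms of `x (x y)` collapse, and what is left is linear in `t(a)` and `n(a)`.
-/


/-- A `k`-algebra with conjugation: a left `k`-vector space `K` with a
(not necessarily distributive or associative) multiplication and identity,
where `k` sits centrally (encoded via scalar compatibility), together with a
self-inverse `k`-linear conjugation fixing `k`. -/
structure ConjAlg (k : Type*) [Field k] (K : Type*) [AddCommGroup K] [Module k K] where
  mul : K → K → K
  one : K
  one_mul : ∀ x, mul one x = x
  mul_one : ∀ x, mul x one = x
  smul_mul : ∀ (c : k) (x y : K), mul (c • x) y = c • mul x y
  mul_smul : ∀ (c : k) (x y : K), mul x (c • y) = c • mul x y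
  conj : K →ₗ[k] K
  conj_conj : ∀ x, conj (conj x) = x
  conj_one : conj one = one

namespace ConjAlg

variable {k : Type*} [Field k] {K : Type*} [AddCommGroup K] [Module k K]

/-- The norm `n(a) = ā a`. -/
def n (A : ConjAlg k K) (x : K) : K := A.mul (A.conj x) x

/-- The trace `t(a) = a + ā`. -/
def t (A : ConjAlg k K) (x : K) : K := x + A.conj x

/-- Membership in (the copy of) `k` inside `K`. -/
def InK (A : ConjAlg k K) (x : K) : Prop := ∃ c : k, x = c • A.one

/-- Weak right distributivity: `(a+b)c = ac + bc` whenever `a ∈ k`. -/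
def WeakRightDistrib (A : ConjAlg k K) : Prop :=
  ∀ (c : k) (b y : K), A.mul (c • A.one + b) y = A.mul (c • A.one) y + A.mul b y

/-- Weak left distributivity: `c(a+b) = ca + cb` whenever `a ∈ k`. -/
def WeakLeftDistrib (A : ConjAlg k K) : Prop :=
  ∀ (c : k) (b y : K), A.mul y (c • A.one + b) = A.mul y (c • A.one) + A.mul y b

/-- Full left distributivity. -/
def LeftDistrib (A : ConjAlg k K) : Prop :=
  ∀ x y z : K, A.mul x (y + z) = A.mul x y + A.mul x z

/-- Full right distributivity. -/
def RightDistrib (A : ConjAlg k K) : Prop :=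
  ∀ x y z : K, A.mul (x + y) z = A.mul x z + A.mul y z

/-- Left alternativity: `a(ab) = a²b`. -/
def LeftAlt (A : ConjAlg k K) : Prop :=
  ∀ a b : K, A.mul a (A.mul a b) = A.mul (A.mul a a) b

/-- The trace is `k`-valued. -/
def TraceKValued (A : ConjAlg k K) : Prop := ∀ x : K, A.InK (A.t x)

/-- The norm is `k`-valued. -/
def NormKValued (A : ConjAlg k K) : Prop := ∀ x : K, A.InK (A.n x)

/-- The norm is anisotropic. -/
def Anisotropic (A : ConjAlg k K) : Prop := ∀ x : K, x ≠ 0 → A.n x ≠ 0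

/-- The norm is symmetric: `n(ā) = n(a)`. -/
def NormSymmetric (A : ConjAlg k K) : Prop := ∀ x : K, A.n (A.conj x) = A.n x

end ConjAlg


open Classical in
/-- The Conway-Smith double multiplication, where `inv` is the inversion map of the
division algebra `K` (so `inv b = b⁻¹` for nonzero `b`). -/
noncomputable def csMul {k : Type*} [Field k] {K : Type*} [AddCommGroup K] [Module k K]
    (A : ConjAlg k K) (D : k) (inv : K → K) (x y : K × K) : K × K :=
  if x.2 = 0 then (A.mul x.1 y.1, A.mul (A.conj x.1) y.2)
  else (A.mul x.1 y.1 + D • A.conj (A.mul x.2 (A.conj y.2)),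
    A.conj (A.mul (A.conj x.2) (A.conj y.1)) +
      A.conj (A.mul (A.conj x.2) (A.conj (A.mul (A.conj x.1)
        (A.conj (A.mul (A.conj (inv x.2)) (A.conj y.2)))))))

namespace ConjAlg

variable {k : Type*} [Field k] {K : Type*} [AddCommGroup K] [Module k K] {A : ConjAlg k K}

local infixl:70 " ⬝ " => A.mul

theorem mul_zero' (x : K) : x ⬝ 0 = 0 := by
  simpa using A.mul_smul 0 x 0

theorem zero_mul' (z : K) : 0 ⬝ z = 0 := by
  simpa using A.smul_mul 0 0 z

theorem mul_neg' (x y : K) : x ⬝ (-y) = -(x ⬝ y) := by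
  simpa using A.mul_smul (-1) x y

theorem neg_mul' (x y : K) : (-x) ⬝ y = -(x ⬝ y) := by
  simpa using A.smul_mul (-1) x y

theorem mul_sub' (hld : A.LeftDistrib) (x y z : K) : x ⬝ (y - z) = x ⬝ y - x ⬝ z := by
  rw [sub_eq_add_neg, hld, mul_neg', ← sub_eq_add_neg]

theorem smul_one_mul (γ : k) (z : K) : (γ • A.one) ⬝ z = γ • z := by
  rw [A.smul_mul, A.one_mul]

theorem mul_smul_one (γ : k) (z : K) : z ⬝ (γ • A.one) = γ • z := by
  rw [A.mul_smul, A.mul_one]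

theorem smul_eq_zero_of_smul_one_eq_zero {γ : k} (h : γ • A.one = 0) (z : K) :
    γ • z = 0 := by
  rw [← smul_one_mul, h, zero_mul']

theorem one_ne_zero_of_ne_zero {b : K} (hb : b ≠ 0) : A.one ≠ 0 := fun h =>
  hb (by rw [← A.mul_one b, h, mul_zero'])

theorem conj_smul_one (γ : k) : A.conj (γ • A.one) = γ • A.one := by
  rw [map_smul, A.conj_one]

theorem smul_one_sub_mul (hwr : A.WeakRightDistrib) (γ : k) (a z : K) :
    (γ • A.one - a) ⬝ z = γ • z - a ⬝ z := by
  rw [sub_eq_add_neg, hwr, smul_one_mul, neg_mul', ← sub_eq_add_neg]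

theorem smul_sub_smul_one_mul (hwr : A.WeakRightDistrib) (γ δ : k) (a z : K) :
    (γ • a - δ • A.one) ⬝ z = γ • (a ⬝ z) - δ • z := by
  rw [← neg_sub, neg_mul', smul_one_sub_mul hwr, A.smul_mul, neg_sub]

theorem n_smul (γ : k) (x : K) : A.n (γ • x) = (γ * γ) • A.n x := by
  rw [n, n, map_smul, A.smul_mul, A.mul_smul, smul_smul]

variable {x : K} {τ ν : k}

theorem conj_eq_smul_one_sub (hτ : A.t x = τ • A.one) : A.conj x = τ • A.one - x := by
  rw [eq_sub_iff_add_eq, add_comm]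
  exact hτ

theorem t_conj (hτ : A.t x = τ • A.one) : A.t (A.conj x) = τ • A.one := by
  rw [t, conj_conj, add_comm]
  exact hτ

theorem conj_mul (hwr : A.WeakRightDistrib) (hτ : A.t x = τ • A.one) (z : K) :
    A.conj x ⬝ z = τ • z - x ⬝ z := by
  rw [conj_eq_smul_one_sub hτ, smul_one_sub_mul hwr]

theorem mul_self_eq (hwr : A.WeakRightDistrib) (hτ : A.t x = τ • A.one)
    (hν : A.n x = ν • A.one) : x ⬝ x = τ • x - ν • A.one := by
  rw [← hν, n, conj_mul hwr hτ, sub_sub_cancel]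

theorem mul_conj_self (hld : A.LeftDistrib) (hwr : A.WeakRightDistrib)
    (hτ : A.t x = τ • A.one) (hν : A.n x = ν • A.one) : x ⬝ A.conj x = ν • A.one := by
  rw [conj_eq_smul_one_sub hτ, mul_sub' hld, mul_smul_one, mul_self_eq hwr hτ hν, sub_sub_cancel]

theorem n_conj (hld : A.LeftDistrib) (hwr : A.WeakRightDistrib)
    (hτ : A.t x = τ • A.one) (hν : A.n x = ν • A.one) : A.n (A.conj x) = ν • A.one := by
  rw [n, conj_conj, mul_conj_self hld hwr hτ hν]

theorem conj_mul_mul (hla : A.LeftAlt) (hwr : A.WeakRightDistrib)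
    (hτ : A.t x = τ • A.one) (hν : A.n x = ν • A.one) (z : K) :
    A.conj x ⬝ (x ⬝ z) = ν • z := by
  rw [conj_mul hwr hτ, hla, mul_self_eq hwr hτ hν, smul_sub_smul_one_mul hwr, sub_sub_cancel]

theorem mul_conj_mul (hla : A.LeftAlt) (hld : A.LeftDistrib) (hwr : A.WeakRightDistrib)
    (hτ : A.t x = τ • A.one) (hν : A.n x = ν • A.one) (z : K) :
    x ⬝ (A.conj x ⬝ z) = ν • z := by
  simpa only [conj_conj] using conj_mul_mul hla hwr (t_conj hτ) (n_conj hld hwr hτ hν) z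

theorem eq_smul_conj_of_mul_eq_one (hla : A.LeftAlt) (hwr : A.WeakRightDistrib)
    (hτ : A.t x = τ • A.one) (hν : A.n x = ν • A.one) (hν0 : ν ≠ 0) {y : K}
    (h : x ⬝ y = A.one) : y = ν⁻¹ • A.conj x := by
  have hy := conj_mul_mul hla hwr hτ hν y
  rw [h, A.mul_one] at hy
  rw [hy, smul_smul, inv_mul_cancel₀ hν0, one_smul]

variable {nm : K → k}

theorem nm_smul (hnm : ∀ x, A.n x = nm x • A.one) (hone : A.one ≠ 0) (γ : k) (x : K) :
    nm (γ • x) = γ * γ * nm x := by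
  apply smul_left_injective k hone
  change nm (γ • x) • A.one = (γ * γ * nm x) • A.one
  rw [← hnm, n_smul, hnm, smul_smul]

theorem nm_ne_zero (haniso : A.Anisotropic) (hnm : ∀ x, A.n x = nm x • A.one) {b : K}
    (hb : b ≠ 0) : nm b ≠ 0 := by
  intro h
  exact haniso b hb (by rw [hnm, h, zero_smul])

theorem nm_zero_smul (hnm : ∀ x, A.n x = nm x • A.one) (z : K) : nm 0 • z = 0 :=
  smul_eq_zero_of_smul_one_eq_zero (by rw [← hnm, n, map_zero, mul_zero']) z

section ConwaySmithDouble

variable (D : k) (inv : K → K) {tr : K → k}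

theorem csMul_mk_zero (a : K) (y : K × K) :
    csMul A D inv (a, 0) y = (a ⬝ y.1, A.conj a ⬝ y.2) :=
  if_pos rfl

theorem csMul_mk_of_ne_zero (hinv : ∀ b, b ≠ 0 → inv b = (nm b)⁻¹ • A.conj b)
    {a b : K} (hb : b ≠ 0) (y : K × K) :
    csMul A D inv (a, b) y =
      (a ⬝ y.1 + D • A.conj (b ⬝ A.conj y.2),
        A.conj (A.conj b ⬝ A.conj y.1) + (nm b)⁻¹ •
          A.conj (A.conj b ⬝ A.conj (A.conj a ⬝ A.conj (b ⬝ A.conj y.2)))) := by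
  rw [csMul, if_neg hb, hinv b hb]
  simp only [map_smul, conj_conj, A.mul_smul, A.smul_mul]

theorem csMul_self (hld : A.LeftDistrib) (hwr : A.WeakRightDistrib) (haniso : A.Anisotropic)
    (htr : ∀ x, A.t x = tr x • A.one) (hnm : ∀ x, A.n x = nm x • A.one)
    (hinv : ∀ b, b ≠ 0 → inv b = (nm b)⁻¹ • A.conj b) (x : K × K) :
    csMul A D inv x x = tr x.1 • x - (nm x.1 - D * nm x.2) • (A.one, 0) := by
  obtain ⟨a, b⟩ := x
  by_cases hb : b = 0
  · subst hb
    simp only [csMul_mk_zero, Prod.smul_mk, Prod.mk_sub_mk, mul_zero', smul_zero, sub_zero,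
      mul_self_eq hwr (htr a) (hnm a), sub_smul, ← smul_smul, nm_zero_smul hnm]
  · rw [csMul_mk_of_ne_zero D inv hinv hb]
    have hbb : A.conj (b ⬝ A.conj b) = nm b • A.one := by
      rw [mul_conj_self hld hwr (htr b) (hnm b), conj_smul_one]
    have hsum : A.conj b ⬝ A.conj a + A.conj b ⬝ a = tr a • A.conj b := by
      rw [← hld, add_comm]
      change A.conj b ⬝ A.t a = _
      rw [htr a, mul_smul_one]
    rw [Prod.smul_mk, Prod.smul_mk, Prod.mk_sub_mk, smul_zero, sub_zero, Prod.mk.injEq]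
    constructor
    · rw [hbb, mul_self_eq hwr (htr a) (hnm a)]
      module
    · rw [hbb, mul_smul_one, map_smul, conj_conj, A.mul_smul, map_smul, smul_smul,
        inv_mul_cancel₀ (nm_ne_zero haniso hnm hb), one_smul, ← map_add, hsum, map_smul,
        conj_conj]

theorem csMul_smul_sub_smul_one (hla : A.LeftAlt) (hld : A.LeftDistrib)
    (hwr : A.WeakRightDistrib) (haniso : A.Anisotropic)
    (htr : ∀ x, A.t x = tr x • A.one) (hnm : ∀ x, A.n x = nm x • A.one)
    (hinv : ∀ b, b ≠ 0 → inv b = (nm b)⁻¹ • A.conj b) (γ δ : k) (x y : K × K) :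
    csMul A D inv (γ • x - δ • (A.one, 0)) y = γ • csMul A D inv x y - δ • y := by
  obtain ⟨a, b⟩ := x
  obtain ⟨c, d⟩ := y
  simp only [Prod.smul_mk, Prod.mk_sub_mk, smul_zero, sub_zero]
  by_cases hγb : γ • b = 0
  · rw [hγb, csMul_mk_zero, smul_sub_smul_one_mul hwr, map_sub, map_smul, conj_smul_one,
      smul_sub_smul_one_mul hwr]
    rcases smul_eq_zero.1 hγb with rfl | rfl
    · simp
    · simp [csMul_mk_zero]
  obtain ⟨hγ, hb⟩ := smul_ne_zero_iff.1 hγb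
  have hν := nm_ne_zero haniso hnm hb
  rw [csMul_mk_of_ne_zero D inv hinv hγb, csMul_mk_of_ne_zero D inv hinv hb,
    nm_smul hnm (one_ne_zero_of_ne_zero hb), Prod.smul_mk, Prod.mk_sub_mk, Prod.mk.injEq]
  constructor
  · simp only [smul_sub_smul_one_mul hwr, A.smul_mul, map_smul]
    module
  · simp only [map_sub, map_smul, A.conj_one, smul_sub_smul_one_mul hwr, conj_conj, A.smul_mul,
      A.mul_smul, mul_sub' hld, conj_mul_mul hla hwr (htr b) (hnm b), smul_add]
    match_scalars <;> field_simp

theorem csMul_csMul_left (hla : A.LeftAlt) (hld : A.LeftDistrib)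
    (hwr : A.WeakRightDistrib) (haniso : A.Anisotropic)
    (htr : ∀ x, A.t x = tr x • A.one) (hnm : ∀ x, A.n x = nm x • A.one)
    (hinv : ∀ b, b ≠ 0 → inv b = (nm b)⁻¹ • A.conj b) (x y : K × K) :
    csMul A D inv x (csMul A D inv x y) =
      tr x.1 • csMul A D inv x y - (nm x.1 - D * nm x.2) • y := by
  obtain ⟨a, b⟩ := x
  obtain ⟨c, d⟩ := y
  by_cases hb : b = 0
  · subst hb
    simp only [csMul_mk_zero, hla _ _, mul_self_eq hwr (htr a) (hnm a),
      mul_self_eq hwr (t_conj (htr a)) (n_conj hld hwr (htr a) (hnm a)),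
      smul_sub_smul_one_mul hwr, Prod.smul_mk, Prod.mk_sub_mk, sub_smul, ← smul_smul,
      nm_zero_smul hnm, smul_zero, sub_zero]
  · rw [csMul_mk_of_ne_zero D inv hinv hb, csMul_mk_of_ne_zero D inv hinv hb]
    dsimp only
    have hν := nm_ne_zero haniso hnm hb
    have hcollapse : A.conj (b ⬝ A.conj (A.conj (A.conj b ⬝ A.conj c) + (nm b)⁻¹ •
          A.conj (A.conj b ⬝ A.conj (A.conj a ⬝ A.conj (b ⬝ A.conj d))))) =
        nm b • c + A.conj a ⬝ A.conj (b ⬝ A.conj d) := by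
      rw [map_add, map_smul, conj_conj, conj_conj, hld, A.mul_smul,
        mul_conj_mul hla hld hwr (htr b) (hnm b), mul_conj_mul hla hld hwr (htr b) (hnm b),
        smul_smul, inv_mul_cancel₀ hν, one_smul, map_add, map_smul,
        conj_conj, conj_conj]
    rw [hcollapse, Prod.smul_mk, Prod.smul_mk, Prod.mk_sub_mk, Prod.mk.injEq]
    constructor
    · simp only [hld _ _ _, A.mul_smul, hla _ _, mul_self_eq hwr (htr a) (hnm a),
        smul_sub_smul_one_mul hwr, conj_mul hwr (htr a)]
      module
    · -- with every `ā ⬝ z` rewritten as `t(a) z - a z`, both sides live on the same atoms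
      simp only [map_add, map_sub, map_smul, conj_conj, hld _ _ _, mul_sub' hld, A.mul_smul,
        conj_mul hwr (htr a), hla _ _, mul_self_eq hwr (htr a) (hnm a), smul_sub_smul_one_mul hwr,
        conj_mul_mul hla hwr (htr b) (hnm b), smul_add, smul_sub]
      match_scalars <;> field_simp <;> ring

end ConwaySmithDouble

end ConjAlg

theorem stmt16 {k : Type*} [Field k] {K : Type*} [AddCommGroup K] [Module k K] (A : ConjAlg k K) (D : k)
    (hla : A.LeftAlt) (hld : A.LeftDistrib) (hwr : A.WeakRightDistrib)
    (ht : A.TraceKValued) (hn : A.NormKValued) (haniso : A.Anisotropic)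
    (inv : K → K)
    (hinv : ∀ b : K, b ≠ 0 → A.mul b (inv b) = A.one ∧ A.mul (inv b) b = A.one) :
    ∀ x y : K × K, csMul A D inv x (csMul A D inv x y) =
      csMul A D inv (csMul A D inv x x) y := by
  choose tr htr using ht
  choose nm hnm using hn
  have hinv_eq : ∀ b, b ≠ 0 → inv b = (nm b)⁻¹ • A.conj b := fun b hb =>
    ConjAlg.eq_smul_conj_of_mul_eq_one hla hwr (htr b) (hnm b)
      (ConjAlg.nm_ne_zero haniso hnm hb) (hinv b hb).1
  intro x y
  rw [ConjAlg.csMul_csMul_left D inv hla hld hwr haniso htr hnm hinv_eq,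
    ConjAlg.csMul_self D inv hld hwr haniso htr hnm hinv_eq,
    ConjAlg.csMul_smul_sub_smul_one D inv hla hld hwr haniso htr hnm hinv_eq]
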